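/- arXiv:0712.3743 — 2 statements merged into one kernel-verified Lean document; each statement's English description precedes it below -/
import Mathlib

section
/- Let (X, ν) be a measure space. Let p > 1, let q = p/(p−1) be its conjugate exponent, let α ∈ (0, 1), let β := pα/(p+α) (so that β/p + β/α = 1), let ε := β/q, and set p' := 1 + ε > 1. Let g, f, F, J : X → [0, ∞] be measurable, let c, C₂ > 0 be constants, and let μ := g · ν. Assume that f ≤ c · F · J^{−1} holds ν-almost everywhere and that f · g ≤ C₂ · F holds ν-almost everywhere. Then ∫_X f^{p'} dμ ≤ C₂ · c^{β/q} · (∫_X F^p dν)^{1/p + β/(pq)} · (∫_X J^{−α} dν)^{β/(αq)}, where all integrals are Lebesgue integrals with values in [0, ∞]. -/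
open MeasureTheory ENNReal

/-! Since `f g ≲ F` and `f ≲ F J⁻¹`, pointwise `g f^(1+ε) ≲ F f^ε ≲ F^(1+ε) J^(-ε)`.
Hölder's inequality for `(F^p)^((1+ε)/p) (J^(-α))^(ε/α)` then applies, because `ε = β/q` is
exactly the value with `(1+ε)/p + ε/α = 1`. -/

namespace ENNReal

theorem mul_rpow_one_add_le {f g F J c C : ℝ≥0∞} {ε : ℝ} (hε : 0 ≤ ε)
    (hfF : f ≤ c * F * J⁻¹) (hfg : f * g ≤ C * F) :
    g * f ^ (1 + ε) ≤ C * c ^ ε * (F ^ (1 + ε) * J ^ (-ε)) :=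
  calc g * f ^ (1 + ε) = f * g * f ^ ε := by
        rw [rpow_add_of_nonneg _ _ zero_le_one hε, rpow_one]; ring
    _ ≤ C * F * (c * F * J⁻¹) ^ ε := by gcongr
    _ = C * c ^ ε * (F ^ (1 + ε) * J ^ (-ε)) := by
        rw [mul_rpow_of_nonneg _ _ hε, mul_rpow_of_nonneg _ _ hε, inv_rpow, ← rpow_neg,
          rpow_add_of_nonneg _ _ zero_le_one hε, rpow_one]
        ring

end ENNReal

namespace MeasureTheory

variable {X : Type*} [MeasurableSpace X] {ν : Measure X}

theorem lintegral_rpow_one_add_withDensity_le {g f F J : X → ℝ≥0∞} {c C : ℝ≥0∞} {ε : ℝ}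
    (hg : Measurable g) (hc : c ≠ ∞) (hC : C ≠ ∞) (hε : 0 ≤ ε)
    (hfF : ∀ᵐ x ∂ν, f x ≤ c * F x * (J x)⁻¹) (hfg : ∀ᵐ x ∂ν, f x * g x ≤ C * F x) :
    ∫⁻ x, f x ^ (1 + ε) ∂(ν.withDensity g) ≤
      C * c ^ ε * ∫⁻ x, F x ^ (1 + ε) * J x ^ (-ε) ∂ν := by
  rw [← lintegral_const_mul' _ _ (mul_ne_top hC (rpow_ne_top_of_nonneg hε hc))]
  refine (lintegral_withDensity_le_lintegral_mul ν hg _).trans (lintegral_mono_ae ?_)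
  filter_upwards [hfF, hfg] with x hxF hxg
  exact mul_rpow_one_add_le hε hxF hxg

theorem lintegral_rpow_mul_rpow_le {u v : X → ℝ≥0∞} (hu : AEMeasurable u ν)
    (hv : AEMeasurable v ν) {a b p r : ℝ} (hp : p ≠ 0) (hr : r ≠ 0) (hap : 0 ≤ a / p)
    (hbr : 0 ≤ b / r) (h : a / p + b / r = 1) :
    ∫⁻ x, u x ^ a * v x ^ b ∂ν ≤
      (∫⁻ x, u x ^ p ∂ν) ^ (a / p) * (∫⁻ x, v x ^ r ∂ν) ^ (b / r) := by
  have hpow : ∀ (w : ℝ≥0∞) {s t : ℝ}, s ≠ 0 → w ^ t = (w ^ s) ^ (t / s) := fun w s t hs => by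
    rw [← rpow_mul, mul_div_cancel₀ _ hs]
  calc ∫⁻ x, u x ^ a * v x ^ b ∂ν
      = ∫⁻ x, (u x ^ p) ^ (a / p) * (v x ^ r) ^ (b / r) ∂ν := by
        simp only [← hpow _ hp, ← hpow _ hr]
    _ ≤ _ := lintegral_mul_norm_pow_le (hu.pow_const p) (hv.pow_const r) hap hbr h

end MeasureTheory

theorem stmt_6_general {X : Type*} [MeasurableSpace X] (ν : Measure X)
    (p q α β ε p' : ℝ) (hp : 1 < p) (hq : q = p / (p - 1))
    (hα : α ∈ Set.Ioo (0 : ℝ) 1) (hβ : β = p * α / (p + α))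
    (hε : ε = β / q) (hp' : p' = 1 + ε)
    (g f F J : X → ℝ≥0∞) (hg : Measurable g)
    (hF : Measurable F) (hJ : Measurable J)
    (c C₂ : ℝ)
    (hfFJ : ∀ᵐ x ∂ν, f x ≤ ENNReal.ofReal c * F x * (J x)⁻¹)
    (hfg : ∀ᵐ x ∂ν, f x * g x ≤ ENNReal.ofReal C₂ * F x) :
    ∫⁻ x, f x ^ p' ∂(ν.withDensity g) ≤
      ENNReal.ofReal C₂ * ENNReal.ofReal c ^ (β / q) *
        (∫⁻ x, F x ^ p ∂ν) ^ (1 / p + β / (p * q)) *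
        (∫⁻ x, J x ^ (-α) ∂ν) ^ (β / (α * q)) := by
  obtain ⟨hα0, -⟩ := hα
  have hq0 : 0 < q := hq ▸ div_pos (by linarith) (by linarith)
  have hβ0 : 0 < β := hβ ▸ div_pos (by positivity) (by linarith)
  have hε0 : 0 < ε := hε ▸ div_pos hβ0 hq0
  have hp'p : p' / p = 1 / p + β / (p * q) := by
    rw [hp', hε]; field_simp
  have hεα : -ε / -α = β / (α * q) := by
    rw [neg_div_neg_eq, hε, div_div, mul_comm]
  calc ∫⁻ x, f x ^ p' ∂(ν.withDensity g)
      ≤ ENNReal.ofReal C₂ * ENNReal.ofReal c ^ ε * ∫⁻ x, F x ^ p' * J x ^ (-ε) ∂ν :=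
        hp' ▸ lintegral_rpow_one_add_withDensity_le hg ofReal_ne_top ofReal_ne_top hε0.le hfFJ hfg
    _ ≤ ENNReal.ofReal C₂ * ENNReal.ofReal c ^ ε *
          ((∫⁻ x, F x ^ p ∂ν) ^ (p' / p) * (∫⁻ x, J x ^ (-α) ∂ν) ^ (-ε / -α)) := by
        gcongr
        refine lintegral_rpow_mul_rpow_le hF.aemeasurable hJ.aemeasurable (by linarith)
          (by linarith) (by rw [hp'p]; positivity) (by rw [hεα]; positivity) ?_
        rw [hp'p, hεα, hβ, hq]
        field_simp
        ring
    _ = _ := by rw [hp'p, hεα, hε]; ring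

/-- The measure-theoretic content of Lemma 1 of the paper: with `q = p/(p-1)`,
`β = pα/(p+α)`, `ε = β/q`, `p' = 1+ε`, if `f ≤ c F J⁻¹` ν-a.e. and
`f·g ≤ C₂ F` ν-a.e., then
`∫ f^p' d(g·ν) ≤ C₂ c^(β/q) (∫ F^p dν)^(1/p + β/(pq)) (∫ J^(-α) dν)^(β/(αq))`. -/
theorem stmt_6 {X : Type*} [MeasurableSpace X] (ν : Measure X)
    (p q α β ε p' : ℝ) (hp : 1 < p) (hq : q = p / (p - 1))
    (hα : α ∈ Set.Ioo (0 : ℝ) 1) (hβ : β = p * α / (p + α))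
    (hε : ε = β / q) (hp' : p' = 1 + ε)
    (g f F J : X → ℝ≥0∞) (hg : Measurable g) (hf : Measurable f)
    (hF : Measurable F) (hJ : Measurable J)
    (c C₂ : ℝ) (hc : 0 < c) (hC₂ : 0 < C₂)
    (hfFJ : ∀ᵐ x ∂ν, f x ≤ ENNReal.ofReal c * F x * (J x)⁻¹)
    (hfg : ∀ᵐ x ∂ν, f x * g x ≤ ENNReal.ofReal C₂ * F x) :
    ∫⁻ x, f x ^ p' ∂(ν.withDensity g) ≤
      ENNReal.ofReal C₂ * ENNReal.ofReal c ^ (β / q) *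
        (∫⁻ x, F x ^ p ∂ν) ^ (1 / p + β / (p * q)) *
        (∫⁻ x, J x ^ (-α) ∂ν) ^ (β / (α * q)) :=
  stmt_6_general ν p q α β ε p' hp hq hα hβ hε hp' g f F J hg hF hJ c C₂ hfFJ hfg
end

section
/- Let n ≥ 1 be a natural number, A > 0 and s₀ real numbers, and let g : ℝ → ℝ be a function that is nonnegative and nonincreasing on [s₀, ∞) and satisfies: (i) τⁿ · g(s + τ) ≤ Aⁿ · g(s)² for all s ≥ s₀ and all τ ∈ (0, 1]; (ii) (2A)ⁿ · g(s₀) ≤ 1. Then g(s) = 0 for all s ≥ s₀ + 2. -/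
/-! Normalise `h = (2A)ⁿ g` and `q = 2⁻ⁿ`, and march along `uₖ = s₀ + 2 - 2 · 2⁻ᵏ` with steps
`τ = 2⁻ᵏ`. Hypothesis (i) becomes `qᵏ h(uₖ₊₁) ≤ q h(uₖ)²`, and with `h(u₀) ≤ 1` this forces
`h(uₖ) ≤ qᵏ` by induction. Every `s ≥ s₀ + 2` lies beyond all `uₖ`, so monotonicity gives
`h(s) ≤ qᵏ → 0`. -/

theorem le_pow_of_pow_mul_le_mul_sq {q : ℝ} (hq : 0 < q) {a : ℕ → ℝ} (ha : ∀ k, 0 ≤ a k)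
    (h0 : a 0 ≤ 1) (hstep : ∀ k, q ^ k * a (k + 1) ≤ q * a k ^ 2) (k : ℕ) : a k ≤ q ^ k := by
  induction k with
  | zero => simpa using h0
  | succ k ih =>
    have hsq : a k ^ 2 ≤ (q ^ k) ^ 2 := pow_le_pow_left₀ (ha k) ih 2
    refine le_of_mul_le_mul_left ?_ (pow_pos hq k)
    calc q ^ k * a (k + 1) ≤ q * a k ^ 2 := hstep k
      _ ≤ q * (q ^ k) ^ 2 := by gcongr
      _ = q ^ k * q ^ (k + 1) := by ring

theorem nonpos_of_forall_le_pow {x q : ℝ} (hq₀ : 0 ≤ q) (hq₁ : q < 1) (h : ∀ k : ℕ, x ≤ q ^ k) :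
    x ≤ 0 :=
  ge_of_tendsto' (tendsto_pow_atTop_nhds_zero_of_lt_one hq₀ hq₁) h

theorem half_pow_mem_Ioc (k : ℕ) : ((1 : ℝ) / 2) ^ k ∈ Set.Ioc 0 1 :=
  ⟨by positivity, pow_le_one₀ (by norm_num) (by norm_num)⟩

theorem mul_apply_sub_half_pow_le {n : ℕ} {A s₀ : ℝ} (hA : 0 < A) {g : ℝ → ℝ}
    (hnonneg : ∀ s, s₀ ≤ s → 0 ≤ g s)
    (hiter : ∀ s, s₀ ≤ s → ∀ τ ∈ Set.Ioc (0 : ℝ) 1, τ ^ n * g (s + τ) ≤ A ^ n * g s ^ 2)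
    (hinit : (2 * A) ^ n * g s₀ ≤ 1) (k : ℕ) :
    (2 * A) ^ n * g (s₀ + 2 - 2 * (1 / 2) ^ k) ≤ ((1 / 2) ^ n) ^ k := by
  set u : ℕ → ℝ := fun k ↦ s₀ + 2 - 2 * (1 / 2) ^ k
  have hu₀ k : s₀ ≤ u k := by simp only [u]; linarith [(half_pow_mem_Ioc k).2]
  have hu_succ k : u (k + 1) = u k + (1 / 2) ^ k := by simp only [u]; ring
  refine le_pow_of_pow_mul_le_mul_sq (a := fun k ↦ (2 * A) ^ n * g (u k)) (by positivity)
    (fun k ↦ mul_nonneg (by positivity) (hnonneg _ (hu₀ k))) (by simpa [u] using hinit)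
    (fun k ↦ ?_) k
  calc ((1 / 2) ^ n) ^ k * ((2 * A) ^ n * g (u (k + 1)))
      = (2 * A) ^ n * (((1 / 2) ^ k) ^ n * g (u k + (1 / 2) ^ k)) := by rw [hu_succ]; ring
    _ ≤ (2 * A) ^ n * (A ^ n * g (u k) ^ 2) :=
      mul_le_mul_of_nonneg_left (hiter _ (hu₀ k) _ (half_pow_mem_Ioc k)) (by positivity)
    _ = (1 / 2) ^ n * ((2 * A) ^ n * g (u k)) ^ 2 := by
      rw [mul_pow, div_pow, one_pow]; field_simp

/-- The De Giorgi-type iteration lemma (Kołodziej; [EGZ], [BGZ]): if `g` is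
nonnegative and nonincreasing on `[s₀, ∞)`, satisfies
`τⁿ g(s+τ) ≤ Aⁿ g(s)²` for `s ≥ s₀`, `τ ∈ (0,1]`, and `(2A)ⁿ g(s₀) ≤ 1`, then
`g` vanishes on `[s₀ + 2, ∞)`. -/
theorem stmt_9 (n : ℕ) (hn : 1 ≤ n) (A : ℝ) (hA : 0 < A) (s₀ : ℝ)
    (g : ℝ → ℝ)
    (hnonneg : ∀ s, s₀ ≤ s → 0 ≤ g s)
    (hmono : AntitoneOn g (Set.Ici s₀))
    (hiter : ∀ s, s₀ ≤ s → ∀ τ ∈ Set.Ioc (0 : ℝ) 1,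
      τ ^ n * g (s + τ) ≤ A ^ n * (g s) ^ 2)
    (hinit : (2 * A) ^ n * g s₀ ≤ 1) :
    ∀ s, s₀ + 2 ≤ s → g s = 0 := by
  intro s hs
  have hc : 0 < (2 * A) ^ n := by positivity
  have hbound (k : ℕ) : (2 * A) ^ n * g s ≤ ((1 / 2) ^ n) ^ k := by
    obtain ⟨hpos, hle⟩ := half_pow_mem_Ioc k
    have hg : g s ≤ g (s₀ + 2 - 2 * (1 / 2) ^ k) :=
      hmono (show s₀ ≤ _ by linarith) (show s₀ ≤ s by linarith) (by linarith)
    exact (mul_le_mul_of_nonneg_left hg hc.le).trans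
      (mul_apply_sub_half_pow_le hA hnonneg hiter hinit k)
  have hgs : (2 * A) ^ n * g s ≤ 0 :=
    nonpos_of_forall_le_pow (by positivity) (pow_lt_one₀ (by norm_num) (by norm_num) (by omega))
      hbound
  exact le_antisymm (nonpos_of_mul_nonpos_right hgs hc) (hnonneg s (by linarith))
end
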